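/- arXiv:1601.04532 — 5 statements merged into one kernel-verified Lean document; each statement's English description precedes it below -/
import Mathlib

section
/- Let X and Y be measurable spaces, J ⊆ X × Y an arbitrary subset, and let μ and ν be probability measures on X and Y respectively, evaluated on arbitrary subsets via their outer-measure extension. If μ(A) ≤ ν(J⁺(A)) for every subset A ⊆ X, then ν(B) ≤ μ(J⁻(B)) for every measurable set B ⊆ Y. (In particular, in the inequalities characterizing J-relatedness, the family of inequalities in one direction implies the family in the other direction.) -/
open MeasureTheory Set

theorem SetRel.image_compl_preimage_subset_compl {X Y : Type*} (J : SetRel X Y) (B : Set Y) :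
    J.image (J.preimage B)ᶜ ⊆ Bᶜ :=
  fun _ ⟨_, hx, hxy⟩ hy ↦ hx ⟨_, hy, hxy⟩

theorem MeasureTheory.measure_le_of_measure_compl_le {X Y : Type*} [MeasurableSpace X]
    [MeasurableSpace Y] {μ : Measure X} {ν : Measure Y} [IsFiniteMeasure ν] {A : Set X}
    {B : Set Y} (hB : MeasurableSet B) (huniv : ν univ ≤ μ univ) (hcompl : μ Aᶜ ≤ ν Bᶜ) :
    ν B ≤ μ A :=
  calc ν B = ν univ - ν Bᶜ := by rw [← measure_compl hB.compl (measure_ne_top ν _), compl_compl]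
    _ ≤ μ univ - μ Aᶜ := tsub_le_tsub huniv hcompl
    _ ≤ μ A := tsub_le_iff_right.2 (measure_univ_le_add_compl A)

/-- For probability measures `μ`, `ν` on measurable spaces `X`, `Y` and an arbitrary
`J ⊆ X × Y`: if `μ(A) ≤ ν(J⁺(A))` for every subset `A ⊆ X`, then `ν(B) ≤ μ(J⁻(B))`
for every measurable `B ⊆ Y`. Measures are evaluated on arbitrary sets via their
outer-measure extension. -/
theorem forward_inequalities_imply_backward
    {X Y : Type*} [MeasurableSpace X] [MeasurableSpace Y]
    (J : Set (X × Y)) (μ : Measure X) (ν : Measure Y)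
    [IsProbabilityMeasure μ] [IsProbabilityMeasure ν]
    (h : ∀ A : Set X, μ A ≤ ν {y | ∃ x ∈ A, (x, y) ∈ J}) :
    ∀ B : Set Y, MeasurableSet B → ν B ≤ μ {x | ∃ y ∈ B, (x, y) ∈ J} :=
  fun B hB ↦ measure_le_of_measure_compl_le hB (by simp)
    ((h (SetRel.preimage J B)ᶜ).trans
      (measure_mono (SetRel.image_compl_preimage_subset_compl J B)))
end

section
/- Let X and Y be measurable spaces, J ⊆ X × Y a subset, and let μ and ν be probability measures on X and Y satisfying ν(J⁺(A')) ≥ μ(A') for every subset A' ⊆ X and μ(J⁻(B')) ≥ ν(B') for every subset B' ⊆ Y (measures evaluated via outer measure). Suppose A ⊆ X is measurable, J⁺(A) ⊆ Y is measurable, and 0 < μ(A) = ν(J⁺(A)) < 1. Then the pair (μ_A, ν_A) := ((1/μ(A))·μ|_A, (1/μ(A))·ν|_{J⁺(A)}) and the pair (μ_{Aᶜ}, ν_{Aᶜ}) := ((1/μ(Aᶜ))·μ|_{Aᶜ}, (1/μ(Aᶜ))·ν|_{J⁺(A)ᶜ}) are pairs of probability measures, and each pair again satisfies the same condition: ν_A(J⁺(A'))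 ≥ μ_A(A') and μ_A(J⁻(B')) ≥ ν_A(B') for all subsets A' ⊆ X and B' ⊆ Y, and likewise for (μ_{Aᶜ}, ν_{Aᶜ}). -/
/-!
Restricting to `A` and to `J⁺(A)` keeps the easy halves of the condition, because `J` maps `A`
into `J⁺(A)` and hence `J⁻` maps the complement of `J⁺(A)` into the complement of `A`. For the
other halves, pad a test set `B'` with `J⁺(A)ᶜ` (resp. `A'` with `A`): the condition for the
padded set, together with the equality of the masses being padded, cancels down to the
inequality for the restricted pair.
-/

open MeasureTheory Set ProbabilityTheory
open scoped ENNReal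

namespace SetRel

variable {X Y : Type*} (J : SetRel X Y)

lemma preimage_compl_image_subset_compl (s : Set X) : J.preimage (J.image s)ᶜ ⊆ sᶜ :=
  fun _ ⟨_, hy, hxy⟩ hx ↦ hy ⟨_, hx, hxy⟩

end SetRel

section Coupling

variable {X Y : Type*} [MeasurableSpace X] [MeasurableSpace Y]

/-- Both inequalities of Strassen's criterion for a coupling of `μ` and `ν` supported in `J`. -/
def CouplingCondition (J : SetRel X Y) (μ : Measure X) (ν : Measure Y) : Prop :=
  (∀ A', μ A' ≤ ν (J.image A')) ∧ ∀ B', ν B' ≤ μ (J.preimage B')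

lemma CouplingCondition.smul {J : SetRel X Y} {μ : Measure X} {ν : Measure Y}
    (h : CouplingCondition J μ ν) (c : ℝ≥0∞) : CouplingCondition J (c • μ) (c • ν) :=
  ⟨fun A' ↦ by simp only [Measure.smul_apply, smul_eq_mul]; gcongr; exact h.1 A',
   fun B' ↦ by simp only [Measure.smul_apply, smul_eq_mul]; gcongr; exact h.2 B'⟩

variable {J : SetRel X Y} {μ : Measure X} {ν : Measure Y} {R : Set X} {S : Set Y}

lemma restrict_le_restrict_preimage_of_preimage_subset
    (hμ : ∀ B, ν B ≤ μ (J.preimage B)) (hR : MeasurableSet R) (hS : MeasurableSet S)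
    (hSR : J.preimage S ⊆ R) (B : Set Y) :
    ν.restrict S B ≤ μ.restrict R (J.preimage B) := by
  rw [Measure.restrict_apply' hS, Measure.restrict_apply' hR]
  calc ν (B ∩ S) ≤ μ (J.preimage (B ∩ S)) := hμ _
    _ ≤ μ (J.preimage B ∩ R) :=
      measure_mono <| (J.preimage_inter_subset).trans (inter_subset_inter_right _ hSR)

lemma restrict_le_restrict_preimage_of_preimage_compl_subset [IsFiniteMeasure ν]
    (hμ : ∀ B, ν B ≤ μ (J.preimage B)) (hR : MeasurableSet R) (hS : MeasurableSet S)
    (hSR : J.preimage Sᶜ ⊆ Rᶜ) (hmass : μ Rᶜ ≤ ν Sᶜ) (B : Set Y) :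
    ν.restrict S B ≤ μ.restrict R (J.preimage B) := by
  rw [Measure.restrict_apply' hS, Measure.restrict_apply' hR]
  have hpad : J.preimage (B ∪ Sᶜ) ⊆ (J.preimage B ∩ R) ∪ Rᶜ := by
    rw [J.preimage_union]
    refine union_subset (fun x hx ↦ ?_) (hSR.trans subset_union_right)
    by_cases hxR : x ∈ R
    exacts [Or.inl ⟨hx, hxR⟩, Or.inr hxR]
  refine (ENNReal.add_le_add_iff_right (measure_ne_top ν Sᶜ)).mp ?_
  calc ν (B ∩ S) + ν Sᶜ = ν (B ∪ Sᶜ) := by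
        rw [← measure_union (disjoint_compl_right.mono_left inter_subset_right) hS.compl,
          inter_union_distrib_right, union_compl_self, inter_univ]
    _ ≤ μ (J.preimage (B ∪ Sᶜ)) := hμ _
    _ ≤ μ (J.preimage B ∩ R) + μ Rᶜ := (measure_mono hpad).trans (measure_union_le _ _)
    _ ≤ μ (J.preimage B ∩ R) + ν Sᶜ := by gcongr

end Coupling

lemma isProbabilityMeasure_inv_smul_restrict {X : Type*} [MeasurableSpace X] {μ : Measure X}
    [IsFiniteMeasure μ] {s : Set X} {c : ℝ≥0∞} (hc : μ s = c) (hc0 : c ≠ 0) :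
    IsProbabilityMeasure (c⁻¹ • μ.restrict s) := by
  subst hc
  exact cond_isProbabilityMeasure hc0

/-- **Lemma (Suhr, Lemma 3.1, first case).** If probability measures `μ`, `ν` satisfy
`ν(J⁺(A')) ≥ μ(A')` and `μ(J⁻(B')) ≥ ν(B')` for all subsets, and `A` is measurable with
`J⁺(A)` measurable and `0 < μ(A) = ν(J⁺(A)) < 1`, then the renormalized restricted pairs
`(μ_A, ν_A)` and `(μ_{Aᶜ}, ν_{Aᶜ})` are probability measures satisfying the same
inequalities. -/
theorem restricted_pairs_satisfy_condition_of_saturated_set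
    {X Y : Type*} [MeasurableSpace X] [MeasurableSpace Y]
    (J : Set (X × Y)) (μ : Measure X) (ν : Measure Y)
    [IsProbabilityMeasure μ] [IsProbabilityMeasure ν]
    (hν : ∀ A' : Set X, μ A' ≤ ν {y | ∃ x ∈ A', (x, y) ∈ J})
    (hμ : ∀ B' : Set Y, ν B' ≤ μ {x | ∃ y ∈ B', (x, y) ∈ J})
    (A : Set X) (hA : MeasurableSet A)
    (hJA : MeasurableSet {y | ∃ x ∈ A, (x, y) ∈ J})
    (h0 : 0 < μ A) (heq : μ A = ν {y | ∃ x ∈ A, (x, y) ∈ J}) (h1 : μ A < 1) :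
    (IsProbabilityMeasure ((μ A)⁻¹ • μ.restrict A) ∧
     IsProbabilityMeasure ((μ A)⁻¹ • ν.restrict {y | ∃ x ∈ A, (x, y) ∈ J}) ∧
     (∀ A' : Set X,
        ((μ A)⁻¹ • μ.restrict A) A' ≤
          ((μ A)⁻¹ • ν.restrict {y | ∃ x ∈ A, (x, y) ∈ J}) {y | ∃ x ∈ A', (x, y) ∈ J}) ∧
     (∀ B' : Set Y,
        ((μ A)⁻¹ • ν.restrict {y | ∃ x ∈ A, (x, y) ∈ J}) B' ≤
          ((μ A)⁻¹ • μ.restrict A) {x | ∃ y ∈ B', (x, y) ∈ J})) ∧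
    (IsProbabilityMeasure ((μ Aᶜ)⁻¹ • μ.restrict Aᶜ) ∧
     IsProbabilityMeasure ((μ Aᶜ)⁻¹ • ν.restrict {y | ∃ x ∈ A, (x, y) ∈ J}ᶜ) ∧
     (∀ A' : Set X,
        ((μ Aᶜ)⁻¹ • μ.restrict Aᶜ) A' ≤
          ((μ Aᶜ)⁻¹ • ν.restrict {y | ∃ x ∈ A, (x, y) ∈ J}ᶜ) {y | ∃ x ∈ A', (x, y) ∈ J}) ∧
     (∀ B' : Set Y,
        ((μ Aᶜ)⁻¹ • ν.restrict {y | ∃ x ∈ A, (x, y) ∈ J}ᶜ) B' ≤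
          ((μ Aᶜ)⁻¹ • μ.restrict Aᶜ) {x | ∃ y ∈ B', (x, y) ∈ J})) := by
  set T : Set Y := {y | ∃ x ∈ A, (x, y) ∈ J}
  have hAT : μ Aᶜ = ν Tᶜ := by
    rw [prob_compl_eq_one_sub hA, prob_compl_eq_one_sub hJA, heq]
  have hAc0 : μ Aᶜ ≠ 0 := (prob_compl_eq_zero_iff hA).not.mpr h1.ne
  have hJA_sub : SetRel.preimage J Tᶜ ⊆ Aᶜ := SetRel.preimage_compl_image_subset_compl J A
  -- `hν` is the second half of the condition for `J.inv`, whose preimages are the images of `J`.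
  have inside : CouplingCondition J (μ.restrict A) (ν.restrict T) :=
    ⟨restrict_le_restrict_preimage_of_preimage_subset (J := SetRel.inv J) hν hJA hA subset_rfl,
     restrict_le_restrict_preimage_of_preimage_compl_subset hμ hA hJA hJA_sub hAT.le⟩
  have outside : CouplingCondition J (μ.restrict Aᶜ) (ν.restrict Tᶜ) :=
    ⟨restrict_le_restrict_preimage_of_preimage_compl_subset (J := SetRel.inv J) hν hJA.compl
      hA.compl (by rw [compl_compl, compl_compl]; rfl) (by rw [compl_compl, compl_compl, heq]),
     restrict_le_restrict_preimage_of_preimage_subset hμ hA.compl hJA.compl hJA_sub⟩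
  exact ⟨⟨isProbabilityMeasure_inv_smul_restrict rfl h0.ne',
      isProbabilityMeasure_inv_smul_restrict heq.symm h0.ne', inside.smul _⟩,
    isProbabilityMeasure_inv_smul_restrict rfl hAc0,
    isProbabilityMeasure_inv_smul_restrict hAT.symm hAc0, outside.smul _⟩
end

section
/- Let N ≥ 1 and let J ⊆ {1,…,N} × {1,…,N} satisfy #{i : ∃ j ∈ A', (i,j) ∈ J} ≥ #A' and #{j : ∃ i ∈ A', (i,j) ∈ J} ≥ #A' for every subset A' ⊆ {1,…,N}. Suppose A ⊆ {1,…,N} is a subset with {i : ∃ j ∈ A, (i,j) ∈ J} = A. Then J_A := J ∩ (A × A) satisfies the analogous two conditions relative to A, i.e. for every B ⊆ A one has #{i ∈ A : ∃ j ∈ B, (i,j) ∈ J_A} ≥ #B and #{j ∈ A : ∃ i ∈ B, (i,j) ∈ J_A} ≥ #B; and J_{Aᶜ} := J ∩ (Aᶜ × Aᶜ) satisfies the analogous two conditions relative to the complement Aᶜ = {1,…,N} \ A. -/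
open Set

section

variable {α : Type*} [Finite α]

theorem ncard_le_ncard_of_disjoint_union_le {B C S T : Set α} (hBC : Disjoint B C)
    (hBS : (B ∪ C).ncard ≤ S.ncard) (hST : S ⊆ T ∪ C) : B.ncard ≤ T.ncard := by
  have hunion := ncard_union_eq hBC (toFinite B) (toFinite C)
  have hS := ncard_le_ncard hST (toFinite _)
  have hTC := ncard_union_le T C
  omega

theorem hall_conditions_restrict_of_predecessors_subset {J : Set (α × α)}
    (h1 : ∀ A' : Set α, A'.ncard ≤ {i | ∃ j ∈ A', (i, j) ∈ J}.ncard)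
    (h2 : ∀ A' : Set α, A'.ncard ≤ {j | ∃ i ∈ A', (i, j) ∈ J}.ncard)
    {A : Set α} (hA : {i | ∃ j ∈ A, (i, j) ∈ J} ⊆ A) (B : Set α) (hB : B ⊆ A) :
    B.ncard ≤ {i | i ∈ A ∧ ∃ j ∈ B, (i, j) ∈ J ∩ A ×ˢ A}.ncard ∧
    B.ncard ≤ {j | j ∈ A ∧ ∃ i ∈ B, (i, j) ∈ J ∩ A ×ˢ A}.ncard := by
  constructor
  · refine (h1 B).trans (ncard_le_ncard ?_ (toFinite _))
    rintro i ⟨j, hj, hij⟩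
    have hi : i ∈ A := hA ⟨j, hB hj, hij⟩
    exact ⟨hi, j, hj, hij, hi, hB hj⟩
  · -- Nothing leaves `Aᶜ`, so the columns reached from `B ∪ Aᶜ` are those reached from `B` in `A`,
    -- together with at most `Aᶜ`.
    refine ncard_le_ncard_of_disjoint_union_le (disjoint_compl_right_iff_subset.mpr hB)
      (h2 (B ∪ Aᶜ)) ?_
    rintro j ⟨i, hi | hi, hij⟩
    · by_cases hj : j ∈ A
      · exact Or.inl ⟨hj, i, hi, hij, hB hi, hj⟩
      · exact Or.inr hj
    · exact Or.inr fun hj => hi (hA ⟨j, hj, hij⟩)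

end

theorem restricted_sets_satisfy_hall_conditions_general
    (N : ℕ) (J : Set (Fin N × Fin N))
    (h1 : ∀ A' : Set (Fin N), A'.ncard ≤ {i | ∃ j ∈ A', (i, j) ∈ J}.ncard)
    (h2 : ∀ A' : Set (Fin N), A'.ncard ≤ {j | ∃ i ∈ A', (i, j) ∈ J}.ncard)
    (A : Set (Fin N)) (hA : {i | ∃ j ∈ A, (i, j) ∈ J} = A) :
    (∀ B ⊆ A,
      B.ncard ≤ {i | i ∈ A ∧ ∃ j ∈ B, (i, j) ∈ J ∩ A ×ˢ A}.ncard ∧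
      B.ncard ≤ {j | j ∈ A ∧ ∃ i ∈ B, (i, j) ∈ J ∩ A ×ˢ A}.ncard) ∧
    (∀ C ⊆ Aᶜ,
      C.ncard ≤ {i | i ∈ Aᶜ ∧ ∃ j ∈ C, (i, j) ∈ J ∩ Aᶜ ×ˢ Aᶜ}.ncard ∧
      C.ncard ≤ {j | j ∈ Aᶜ ∧ ∃ i ∈ C, (i, j) ∈ J ∩ Aᶜ ×ˢ Aᶜ}.ncard) := by
  refine ⟨hall_conditions_restrict_of_predecessors_subset h1 h2 hA.le, ?_⟩
  -- Transposing `J` swaps the two Hall conditions, and `Aᶜ` is predecessor-closed for the transpose.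
  have hAc : {i | ∃ j ∈ Aᶜ, (i, j) ∈ Prod.swap ⁻¹' J} ⊆ Aᶜ :=
    fun i ⟨j, hj, hji⟩ hi => hj (hA.le ⟨i, hi, hji⟩)
  have hswap := hall_conditions_restrict_of_predecessors_subset (J := Prod.swap ⁻¹' J) h2 h1 hAc
  rw [← preimage_swap_prod, ← preimage_inter] at hswap
  exact fun C hC => (hswap C hC).symm

/-- **(Step in the proof of Suhr, Lemma 3.2.)** Suppose `J ⊆ {1,…,N} × {1,…,N}` satisfies the
Hall-type conditions `#π₁(π₂⁻¹(A') ∩ J) ≥ #A'` and `#π₂(π₁⁻¹(A') ∩ J) ≥ #A'` for all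
`A' ⊆ {1,…,N}`, and `A` satisfies `π₁(π₂⁻¹(A) ∩ J) = A`. Then `J_A := J ∩ (A × A)`
satisfies the analogous conditions relative to `A`, and `J_{Aᶜ} := J ∩ (Aᶜ × Aᶜ)` satisfies
the analogous conditions relative to `Aᶜ`. -/
theorem restricted_sets_satisfy_hall_conditions
    (N : ℕ) (hN : 1 ≤ N) (J : Set (Fin N × Fin N))
    (h1 : ∀ A' : Set (Fin N), A'.ncard ≤ {i | ∃ j ∈ A', (i, j) ∈ J}.ncard)
    (h2 : ∀ A' : Set (Fin N), A'.ncard ≤ {j | ∃ i ∈ A', (i, j) ∈ J}.ncard)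
    (A : Set (Fin N)) (hA : {i | ∃ j ∈ A, (i, j) ∈ J} = A) :
    (∀ B ⊆ A,
      B.ncard ≤ {i | i ∈ A ∧ ∃ j ∈ B, (i, j) ∈ J ∩ A ×ˢ A}.ncard ∧
      B.ncard ≤ {j | j ∈ A ∧ ∃ i ∈ B, (i, j) ∈ J ∩ A ×ˢ A}.ncard) ∧
    (∀ C ⊆ Aᶜ,
      C.ncard ≤ {i | i ∈ Aᶜ ∧ ∃ j ∈ C, (i, j) ∈ J ∩ Aᶜ ×ˢ Aᶜ}.ncard ∧
      C.ncard ≤ {j | j ∈ Aᶜ ∧ ∃ i ∈ C, (i, j) ∈ J ∩ Aᶜ ×ˢ Aᶜ}.ncard) :=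
  restricted_sets_satisfy_hall_conditions_general N J h1 h2 A hA
end

section
/- Let X and Y be Polish spaces and J ⊆ X × Y an arbitrary subset. Let μ = Σᵢ₌₁^m aᵢ δ_{xᵢ} and ν = Σⱼ₌₁^n bⱼ δ_{yⱼ} be finitely supported Borel probability measures on X and Y respectively (with aᵢ, bⱼ > 0). Assume that ν(J⁺(A)) ≥ μ(A) for every subset A ⊆ {x₁,…,x_m} and μ(J⁻(B)) ≥ ν(B) for every subset B ⊆ {y₁,…,y_n}. Then μ and ν are J-related, i.e. there exists a coupling π of μ and ν with π(J) = 1. -/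
/-!
Gale's supply–demand theorem, by induction on the supports of the weights `a` and `b`. Take `i₀`
with `a i₀ > 0` and a neighbour `j₀` with `b j₀ > 0`, and route along `(i₀, j₀)` the largest amount
`ε` that preserves Hall's condition `a(A) ≤ b(J⁺ A)`. Then either `a i₀` or `b j₀` is exhausted, or
some set `A` becomes tight, `a(A) = b(J⁺ A)`, and the problem splits into the two smaller problems
`A → J⁺ A` and `Aᶜ → (J⁺ A)ᶜ`. The transport plan on `{xᵢ} × {yⱼ}` is then the coupling.
-/

open MeasureTheory Set Finset Function
open scoped ENNReal

theorem ncard_support_indicator_le {α M : Type*} [Finite α] [Zero M] {s : Set α} {f : α → M} :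
    (support (s.indicator f)).ncard ≤ (support f).ncard := by
  rw [Set.support_indicator]
  exact Set.ncard_le_ncard Set.inter_subset_right

theorem ncard_support_indicator_lt {α M : Type*} [Finite α] [Zero M] {s : Set α} {f : α → M}
    {i : α} (hi : i ∉ s) (hfi : f i ≠ 0) :
    (support (s.indicator f)).ncard < (support f).ncard := by
  rw [Set.support_indicator]
  exact Set.ncard_lt_ncard ⟨Set.inter_subset_right, fun h => hi (h hfi).1⟩

theorem support_sub_single_subset {α M : Type*} [DecidableEq α] [AddGroup M] {f : α → M} {i : α}
    {c : M} (hi : f i ≠ 0) : support (f - Pi.single i c) ⊆ support f := by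
  intro k hk
  rcases eq_or_ne k i with rfl | hki
  · exact hi
  · simpa [hki] using hk

theorem ncard_support_sub_single_self_lt {α M : Type*} [Finite α] [DecidableEq α] [AddGroup M]
    {f : α → M} {i : α} (hi : f i ≠ 0) :
    (support (f - Pi.single i (f i))).ncard < (support f).ncard :=
  Set.ncard_lt_ncard ⟨support_sub_single_subset hi, fun h => by simpa using h hi⟩

section Transport

variable {ι κ : Type*} [Fintype κ] {R : ι → κ → Prop}

open Classical in
noncomputable def relImage (R : ι → κ → Prop) (A : Finset ι) : Finset κ :=
  univ.filter fun j => ∃ i ∈ A, R i j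

@[simp]
theorem mem_relImage {A : Finset ι} {j : κ} : j ∈ relImage R A ↔ ∃ i ∈ A, R i j := by
  simp [relImage]

theorem relImage_mono {A B : Finset ι} (h : A ⊆ B) : relImage R A ⊆ relImage R B := by
  intro j
  simp only [mem_relImage]
  exact fun ⟨i, hi, hij⟩ => ⟨i, h hi, hij⟩

theorem relImage_union [DecidableEq ι] [DecidableEq κ] (A B : Finset ι) :
    relImage R (A ∪ B) = relImage R A ∪ relImage R B := by
  ext j
  simp only [mem_relImage, Finset.mem_union, or_and_right, exists_or]

variable [Fintype ι]

structure IsTransportPlan (R : ι → κ → Prop) (a : ι → ℝ) (b : κ → ℝ) (w : ι → κ → ℝ) :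
    Prop where
  nonneg : ∀ i j, 0 ≤ w i j
  rel_of_ne_zero : ∀ i j, w i j ≠ 0 → R i j
  sum_row : ∀ i, ∑ j, w i j = a i
  sum_col : ∀ j, ∑ i, w i j = b j

theorem isTransportPlan_zero : IsTransportPlan R 0 0 0 where
  nonneg _ _ := le_rfl
  rel_of_ne_zero _ _ h := absurd rfl h
  sum_row _ := by simp
  sum_col _ := by simp

theorem isTransportPlan_single [DecidableEq ι] [DecidableEq κ] {i₀ : ι} {j₀ : κ}
    (hR : R i₀ j₀) {ε : ℝ} (hε : 0 ≤ ε) :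
    IsTransportPlan R (Pi.single i₀ ε) (Pi.single j₀ ε) (Pi.single i₀ (Pi.single j₀ ε)) where
  nonneg i j := by
    rcases eq_or_ne i i₀ with rfl | hi
    · rcases eq_or_ne j j₀ with rfl | hj <;> simp [*]
    · simp [hi]
  rel_of_ne_zero i j h := by
    rcases eq_or_ne i i₀ with rfl | hi
    · rcases eq_or_ne j j₀ with rfl | hj
      · exact hR
      · simp [hj] at h
    · simp [hi] at h
  sum_row i := by rcases eq_or_ne i i₀ with rfl | hi <;> simp [*]
  sum_col j := by
    simp only [← Finset.sum_apply, Finset.sum_pi_single', Finset.mem_univ, if_true]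

theorem IsTransportPlan.add {a₁ a₂ : ι → ℝ} {b₁ b₂ : κ → ℝ} {w₁ w₂ : ι → κ → ℝ}
    (h₁ : IsTransportPlan R a₁ b₁ w₁) (h₂ : IsTransportPlan R a₂ b₂ w₂) :
    IsTransportPlan R (a₁ + a₂) (b₁ + b₂) (w₁ + w₂) where
  nonneg i j := add_nonneg (h₁.nonneg i j) (h₂.nonneg i j)
  rel_of_ne_zero i j h := by
    by_cases h0 : w₁ i j = 0
    · exact h₂.rel_of_ne_zero i j (by simpa [h0] using h)
    · exact h₁.rel_of_ne_zero i j h0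
  sum_row i := by simp [sum_add_distrib, h₁.sum_row, h₂.sum_row]
  sum_col j := by simp [sum_add_distrib, h₁.sum_col, h₂.sum_col]

structure HallCondition (R : ι → κ → Prop) (a : ι → ℝ) (b : κ → ℝ) : Prop where
  nonneg_left : 0 ≤ a
  nonneg_right : 0 ≤ b
  sum_eq : ∑ i, a i = ∑ j, b j
  le_sum_relImage : ∀ A : Finset ι, ∑ i ∈ A, a i ≤ ∑ j ∈ relImage R A, b j

structure IsTightSet (R : ι → κ → Prop) (a : ι → ℝ) (b : κ → ℝ) (A : Finset ι) : Prop where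
  sum_pos : 0 < ∑ i ∈ A, a i
  sum_lt : ∑ i ∈ A, a i < ∑ i, a i
  sum_eq : ∑ i ∈ A, a i = ∑ j ∈ relImage R A, b j

namespace HallCondition

variable {a : ι → ℝ} {b : κ → ℝ} {A : Finset ι}

theorem indicator_of_isTightSet (h : HallCondition R a b) (hA : IsTightSet R a b A) :
    HallCondition R ((A : Set ι).indicator a) ((relImage R A : Set κ).indicator b) where
  nonneg_left := Set.indicator_nonneg fun i _ => h.nonneg_left i
  nonneg_right := Set.indicator_nonneg fun j _ => h.nonneg_right j
  sum_eq := by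
    classical
    rw [sum_indicator_subset _ (subset_univ _), sum_indicator_subset _ (subset_univ _)]
    exact hA.sum_eq
  le_sum_relImage A' := by
    classical
    rw [sum_indicator_eq_sum_inter, sum_indicator_eq_sum_inter]
    calc ∑ i ∈ A' ∩ A, a i
        ≤ ∑ j ∈ relImage R (A' ∩ A), b j := h.le_sum_relImage _
      _ ≤ ∑ j ∈ relImage R A' ∩ relImage R A, b j :=
        sum_le_sum_of_subset_of_nonneg
          (subset_inter (relImage_mono inter_subset_left) (relImage_mono inter_subset_right))
          fun j _ _ => h.nonneg_right j

theorem indicator_compl_of_isTightSet (h : HallCondition R a b) (hA : IsTightSet R a b A) :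
    HallCondition R ((A : Set ι)ᶜ.indicator a) ((relImage R A : Set κ)ᶜ.indicator b) where
  nonneg_left := Set.indicator_nonneg fun i _ => h.nonneg_left i
  nonneg_right := Set.indicator_nonneg fun j _ => h.nonneg_right j
  sum_eq := by
    classical
    simp only [Set.indicator_compl, Pi.sub_apply, sum_sub_distrib]
    rw [sum_indicator_subset _ (subset_univ _), sum_indicator_subset _ (subset_univ _), h.sum_eq,
      hA.sum_eq]
  le_sum_relImage A' := by
    classical
    simp only [Set.indicator_compl, Pi.sub_apply, sum_sub_distrib, sum_indicator_eq_sum_inter]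
    have hunion := h.le_sum_relImage (A' ∪ A)
    rw [relImage_union] at hunion
    have := sum_union_inter (s₁ := A') (s₂ := A) (f := a)
    have := sum_union_inter (s₁ := relImage R A') (s₂ := relImage R A) (f := b)
    linarith [hA.sum_eq]

theorem exists_isTransportPlan_of_isTightSet (h : HallCondition R a b) (hA : IsTightSet R a b A)
    (ih : ∀ a' b', HallCondition R a' b' → (support a').ncard < (support a).ncard →
      (support b').ncard ≤ (support b).ncard → ∃ w, IsTransportPlan R a' b' w) :
    ∃ w, IsTransportPlan R a b w := by
  classical
  obtain ⟨i₁, hi₁A, hi₁⟩ : ∃ i ∈ A, a i ≠ 0 := exists_ne_zero_of_sum_ne_zero hA.sum_pos.ne'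
  obtain ⟨i₂, hi₂A, hi₂⟩ : ∃ i ∈ Aᶜ, a i ≠ 0 := by
    refine exists_ne_zero_of_sum_ne_zero (ne_of_gt ?_)
    linarith [sum_compl_add_sum A a, hA.sum_lt]
  obtain ⟨w₁, hw₁⟩ := ih _ _ (h.indicator_of_isTightSet hA)
    (ncard_support_indicator_lt (by simpa using hi₂A) hi₂) ncard_support_indicator_le
  obtain ⟨w₂, hw₂⟩ := ih _ _ (h.indicator_compl_of_isTightSet hA)
    (ncard_support_indicator_lt (by simpa using hi₁A) hi₁) ncard_support_indicator_le
  exact ⟨w₁ + w₂, by simpa only [Set.indicator_self_add_compl] using hw₁.add hw₂⟩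

theorem exists_rel_pos (h : HallCondition R a b) {i₀ : ι} (hi₀ : a i₀ ≠ 0) :
    ∃ j, R i₀ j ∧ 0 < b j := by
  have hpos : ∑ j ∈ relImage R {i₀}, (0 : ℝ) < ∑ j ∈ relImage R {i₀}, b j := by
    simpa using (lt_of_le_of_ne (h.nonneg_left i₀) hi₀.symm).trans_le
      (by simpa using h.le_sum_relImage {i₀})
  obtain ⟨j, hj, hbj⟩ := exists_lt_of_sum_lt hpos
  exact ⟨j, by simpa using hj, hbj⟩

theorem sub_single [DecidableEq ι] [DecidableEq κ] (h : HallCondition R a b) {i₀ : ι} {j₀ : κ}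
    (hR : R i₀ j₀) {ε : ℝ} (ha : ε ≤ a i₀) (hb : ε ≤ b j₀)
    (hslack : ∀ A : Finset ι, i₀ ∉ A → j₀ ∈ relImage R A → 0 < ∑ i ∈ A, a i →
      ε ≤ ∑ j ∈ relImage R A, b j - ∑ i ∈ A, a i) :
    HallCondition R (a - Pi.single i₀ ε) (b - Pi.single j₀ ε) where
  nonneg_left i := by
    rcases eq_or_ne i i₀ with rfl | hi
    · simpa using ha
    · simpa [hi] using h.nonneg_left i
  nonneg_right j := by
    rcases eq_or_ne j j₀ with rfl | hj
    · simpa using hb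
    · simpa [hj] using h.nonneg_right j
  sum_eq := by simp [sum_sub_distrib, h.sum_eq]
  le_sum_relImage A := by
    have hall := h.le_sum_relImage A
    simp only [Pi.sub_apply, sum_sub_distrib, sum_pi_single']
    by_cases hi₀ : i₀ ∈ A
    · have hj₀ : j₀ ∈ relImage R A := mem_relImage.2 ⟨i₀, hi₀, hR⟩
      simpa [hi₀, hj₀] using hall
    · rw [if_neg hi₀, sub_zero]
      split_ifs with hj₀
      · rcases (sum_nonneg fun i _ => h.nonneg_left i).lt_or_eq with hpos | hzero
        · linarith [hslack A hi₀ hj₀ hpos]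
        · have := single_le_sum (fun j _ => h.nonneg_right j) hj₀
          linarith
      · linarith

theorem exists_sub_single [DecidableEq ι] [DecidableEq κ] (h : HallCondition R a b) {i₀ : ι}
    {j₀ : κ} (hR : R i₀ j₀) :
    ∃ ε, 0 ≤ ε ∧ HallCondition R (a - Pi.single i₀ ε) (b - Pi.single j₀ ε) ∧
      (ε = a i₀ ∨ ε = b j₀ ∨ ∃ A, IsTightSet R (a - Pi.single i₀ ε) (b - Pi.single j₀ ε) A) := by
  classical
  set slack : Finset ι → ℝ := fun A => ∑ j ∈ relImage R A, b j - ∑ i ∈ A, a i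
  set critical := univ.filter fun A : Finset ι =>
    i₀ ∉ A ∧ j₀ ∈ relImage R A ∧ 0 < ∑ i ∈ A, a i
  -- the constraints on `ε` in `sub_single`; their minimum is the largest admissible `ε`
  set bounds := insert (a i₀) (insert (b j₀) (critical.image slack))
  set ε := bounds.min' (insert_nonempty _ _)
  have hε_le : ∀ c ∈ bounds, ε ≤ c := fun c hc => min'_le _ _ hc
  have h' : HallCondition R (a - Pi.single i₀ ε) (b - Pi.single j₀ ε) :=
    h.sub_single hR (hε_le _ (by simp [bounds])) (hε_le _ (by simp [bounds]))
      fun A hi₀ hj₀ hpos => hε_le _ <| mem_insert_of_mem <| mem_insert_of_mem <|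
        Finset.mem_image_of_mem slack
          (Finset.mem_filter.2 ⟨Finset.mem_univ _, hi₀, hj₀, hpos⟩)
  refine ⟨ε, ?_, h', ?_⟩
  · refine le_min' _ _ _ fun c hc => ?_
    simp only [bounds, Finset.mem_insert, Finset.mem_image] at hc
    rcases hc with rfl | rfl | ⟨A, -, rfl⟩
    · exact h.nonneg_left i₀
    · exact h.nonneg_right j₀
    · exact sub_nonneg.2 (h.le_sum_relImage A)
  by_cases hεa : ε = a i₀
  · exact Or.inl hεa
  rcases mem_insert.1 (min'_mem bounds (insert_nonempty _ _)) with hεa' | hε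
  · exact absurd hεa' hεa
  rcases mem_insert.1 hε with hεb | hε
  · exact Or.inr (Or.inl hεb)
  obtain ⟨A, hA, hslackA⟩ := mem_image.1 hε
  simp only [critical, Finset.mem_filter, Finset.mem_univ, true_and] at hA
  obtain ⟨hi₀, hj₀, hpos⟩ := hA
  have hεa_lt : ε < a i₀ := lt_of_le_of_ne (hε_le _ (mem_insert_self _ _)) hεa
  have hsum_insert : ∑ i ∈ A, a i + a i₀ ≤ ∑ i, a i := by
    rw [add_comm, ← sum_insert hi₀]
    exact sum_le_univ_sum_of_nonneg h.nonneg_left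
  refine Or.inr (Or.inr ⟨A, ?_, ?_, ?_⟩) <;>
    simp only [Pi.sub_apply, sum_sub_distrib, sum_pi_single', if_neg hi₀, if_pos hj₀,
      Finset.mem_univ, if_true, sub_zero]
  · exact hpos
  · linarith
  · linarith [show slack A = ε from hslackA]

theorem exists_isTransportPlan (h : HallCondition R a b) : ∃ w, IsTransportPlan R a b w := by
  classical
  induction hn : (support a).ncard + (support b).ncard using Nat.strong_induction_on
    generalizing a b with
  | _ n ih =>
  by_cases ha0 : a = 0
  · have hb0 : b = 0 := funext fun j =>
      (sum_eq_zero_iff_of_nonneg fun j _ => h.nonneg_right j).1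
        (by simpa [ha0] using h.sum_eq.symm) j (mem_univ j)
    exact ⟨0, ha0 ▸ hb0 ▸ isTransportPlan_zero⟩
  obtain ⟨i₀, hi₀⟩ := Function.ne_iff.1 ha0
  obtain ⟨j₀, hR, hj₀⟩ := h.exists_rel_pos hi₀
  obtain ⟨ε, hε, h', hcases⟩ := h.exists_sub_single hR
  have hsupp_a := support_sub_single_subset (c := ε) hi₀
  have hsupp_b := support_sub_single_subset (c := ε) hj₀.ne'
  have hle_a := Set.ncard_le_ncard hsupp_a
  have hle_b := Set.ncard_le_ncard hsupp_b
  obtain ⟨w, hw⟩ : ∃ w, IsTransportPlan R (a - Pi.single i₀ ε) (b - Pi.single j₀ ε) w := by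
    rcases hcases with rfl | rfl | ⟨A, hA⟩
    · have := ncard_support_sub_single_self_lt hi₀
      exact ih _ (by omega) h' rfl
    · have := ncard_support_sub_single_self_lt hj₀.ne'
      exact ih _ (by omega) h' rfl
    · exact h'.exists_isTransportPlan_of_isTightSet hA fun a' b' h'' hlt hle =>
        ih _ (by omega) h'' rfl
  exact ⟨_, by simpa using hw.add (isTransportPlan_single hR hε)⟩

end HallCondition

theorem exists_ennreal_transportPlan {a : ι → ℝ≥0∞} {b : κ → ℝ≥0∞} (hfin : ∑ i, a i ≠ ∞)
    (hsum : ∑ i, a i = ∑ j, b j)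
    (hall : ∀ A : Finset ι, ∑ i ∈ A, a i ≤ ∑ j ∈ relImage R A, b j) :
    ∃ w : ι → κ → ℝ≥0∞,
      (∀ i j, w i j ≠ 0 → R i j) ∧ (∀ i, ∑ j, w i j = a i) ∧ ∀ j, ∑ i, w i j = b j := by
  have ha i : a i ≠ ∞ :=
    ne_top_of_le_ne_top hfin (single_le_sum (fun _ _ => zero_le) (Finset.mem_univ i))
  have hb j : b j ≠ ∞ :=
    ne_top_of_le_ne_top (hsum ▸ hfin) (single_le_sum (fun _ _ => zero_le) (Finset.mem_univ j))
  have h : HallCondition R (fun i => (a i).toReal) (fun j => (b j).toReal) := by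
    refine ⟨fun _ => ENNReal.toReal_nonneg, fun _ => ENNReal.toReal_nonneg, ?_, fun A => ?_⟩ <;>
      rw [← ENNReal.toReal_sum fun i _ => ha i, ← ENNReal.toReal_sum fun j _ => hb j]
    · rw [hsum]
    · exact ENNReal.toReal_mono (ENNReal.sum_ne_top.2 fun j _ => hb j) (hall A)
  obtain ⟨w, hw⟩ := h.exists_isTransportPlan
  refine ⟨fun i j => ENNReal.ofReal (w i j), fun i j hij => hw.rel_of_ne_zero i j ?_,
    fun i => ?_, fun j => ?_⟩
  · exact fun h0 => hij (by simp [h0])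
  · rw [← ENNReal.ofReal_sum_of_nonneg fun j _ => hw.nonneg i j, hw.sum_row,
      ENNReal.ofReal_toReal (ha i)]
  · rw [← ENNReal.ofReal_sum_of_nonneg fun i _ => hw.nonneg i j, hw.sum_col,
      ENNReal.ofReal_toReal (hb j)]

end Transport

section DiracSums

variable {α β ι κ : Type*} [MeasurableSpace α] [MeasurableSpace β] [Fintype ι] [Fintype κ]

theorem sum_smul_dirac_apply (a : ι → ℝ≥0∞) (x : ι → α) (S : Set α) :
    (∑ i, a i • Measure.dirac (x i)) S = ∑ i, a i * Measure.dirac (x i) S := by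
  simp [Measure.finsetSum_apply]

theorem sum_le_sum_smul_dirac_apply_image (a : ι → ℝ≥0∞) (x : ι → α) (A : Finset ι) :
    ∑ i ∈ A, a i ≤ (∑ i, a i • Measure.dirac (x i)) (x '' A) := by
  rw [sum_smul_dirac_apply]
  calc ∑ i ∈ A, a i = ∑ i ∈ A, a i * Measure.dirac (x i) (x '' A) :=
        sum_congr rfl fun i hi => by
          rw [Measure.dirac_apply_of_mem (mem_image_of_mem x hi), mul_one]
    _ ≤ ∑ i, a i * Measure.dirac (x i) (x '' A) := sum_le_univ_sum_of_nonneg fun _ => zero_le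

theorem sum_smul_dirac_apply_eq_sum_filter [MeasurableSingletonClass α] (a : ι → ℝ≥0∞)
    (x : ι → α) (S : Set α) [DecidablePred fun i => x i ∈ S] :
    (∑ i, a i • Measure.dirac (x i)) S = ∑ i with x i ∈ S, a i := by
  simp [sum_smul_dirac_apply, Measure.dirac_apply, Set.indicator_apply, sum_filter]

theorem sum_smul_dirac_apply_of_ne_zero_imp_mem (a : ι → ℝ≥0∞) (x : ι → α) {S : Set α}
    (hS : ∀ i, a i ≠ 0 → x i ∈ S) : (∑ i, a i • Measure.dirac (x i)) S = ∑ i, a i := by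
  rw [sum_smul_dirac_apply]
  refine sum_congr rfl fun i _ => ?_
  rcases eq_or_ne (a i) 0 with h0 | h0
  · simp [h0]
  · rw [Measure.dirac_apply_of_mem (hS i h0), mul_one]

theorem map_fst_sum_sum_smul_dirac (w : ι → κ → ℝ≥0∞) (x : ι → α) (y : κ → β) :
    (∑ i, ∑ j, w i j • Measure.dirac (x i, y j)).map Prod.fst =
      ∑ i, (∑ j, w i j) • Measure.dirac (x i) := by
  simp [Measure.map_finset_sum, measurable_fst.aemeasurable, Measure.map_dirac' measurable_fst,
    sum_smul]

theorem map_snd_sum_sum_smul_dirac (w : ι → κ → ℝ≥0∞) (x : ι → α) (y : κ → β) :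
    (∑ i, ∑ j, w i j • Measure.dirac (x i, y j)).map Prod.snd =
      ∑ j, (∑ i, w i j) • Measure.dirac (y j) := by
  rw [Finset.sum_comm]
  simp [Measure.map_finset_sum, measurable_snd.aemeasurable, Measure.map_dirac' measurable_snd,
    sum_smul]

theorem sum_le_sum_relImage_of_le_measure [MeasurableSingletonClass β] (a : ι → ℝ≥0∞)
    (b : κ → ℝ≥0∞) (x : ι → α) (y : κ → β) (J : Set (α × β))
    (h : ∀ A ⊆ range x, (∑ i, a i • Measure.dirac (x i)) A ≤
      (∑ j, b j • Measure.dirac (y j)) {y' | ∃ x' ∈ A, (x', y') ∈ J})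
    (A : Finset ι) : ∑ i ∈ A, a i ≤ ∑ j ∈ relImage (fun i j => (x i, y j) ∈ J) A, b j := by
  classical
  calc ∑ i ∈ A, a i ≤ (∑ i, a i • Measure.dirac (x i)) (x '' A) :=
        sum_le_sum_smul_dirac_apply_image a x A
    _ ≤ (∑ j, b j • Measure.dirac (y j)) {y' | ∃ x' ∈ x '' A, (x', y') ∈ J} :=
        h _ (image_subset_range _ _)
    _ = ∑ j ∈ relImage (fun i j => (x i, y j) ∈ J) A, b j := by
        rw [sum_smul_dirac_apply_eq_sum_filter]
        congr 1
        ext j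
        simp [relImage]

end DiracSums

theorem finitely_supported_J_related_general
    {X Y : Type*}
    [MeasurableSpace X]
    [TopologicalSpace Y] [PolishSpace Y] [MeasurableSpace Y] [BorelSpace Y]
    (J : Set (X × Y)) (m n : ℕ)
    (x : Fin m → X) (y : Fin n → Y) (a : Fin m → ℝ≥0∞) (b : Fin n → ℝ≥0∞)
    (μ : Measure X) (ν : Measure Y)
    [IsProbabilityMeasure μ] [IsProbabilityMeasure ν]
    (hμ : μ = ∑ i, a i • Measure.dirac (x i))
    (hν : ν = ∑ j, b j • Measure.dirac (y j))
    (h1 : ∀ A : Set X, A ⊆ Set.range x → μ A ≤ ν {y' | ∃ x' ∈ A, (x', y') ∈ J}) :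
    ∃ π : Measure (X × Y), IsProbabilityMeasure π ∧
      π.map Prod.fst = μ ∧ π.map Prod.snd = ν ∧ π J = 1 := by
  have ha : ∑ i, a i = 1 := by
    simpa [hμ, sum_smul_dirac_apply] using measure_univ (μ := μ)
  have hb : ∑ j, b j = 1 := by
    simpa [hν, sum_smul_dirac_apply] using measure_univ (μ := ν)
  obtain ⟨w, hwJ, hrow, hcol⟩ :=
    exists_ennreal_transportPlan (by simp [ha]) (ha.trans hb.symm)
      (sum_le_sum_relImage_of_le_measure a b x y J (hμ ▸ hν ▸ h1))
  have hmass (S : Set (X × Y)) (hS : ∀ i j, w i j ≠ 0 → (x i, y j) ∈ S) :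
      (∑ i, ∑ j, w i j • Measure.dirac (x i, y j)) S = 1 := by
    rw [← Fintype.sum_prod_type', sum_smul_dirac_apply_of_ne_zero_imp_mem
      (fun p : Fin m × Fin n => w p.1 p.2) (fun p => (x p.1, y p.2)) fun p => hS p.1 p.2,
      Fintype.sum_prod_type']
    simp [hrow, ha]
  refine ⟨∑ i, ∑ j, w i j • Measure.dirac (x i, y j), ⟨hmass _ fun _ _ _ => trivial⟩, ?_, ?_,
    hmass _ hwJ⟩
  · simp [map_fst_sum_sum_smul_dirac, hrow, hμ]
  · simp [map_snd_sum_sum_smul_dirac, hcol, hν]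

/-- **(Finite-support case in the proof of Suhr, Theorem 2.)** Let `X`, `Y` be Polish spaces,
`J ⊆ X × Y` arbitrary, and let `μ = ∑ aᵢ δ_{xᵢ}` and `ν = ∑ bⱼ δ_{yⱼ}` be finitely supported
probability measures with positive weights. If `ν(J⁺(A)) ≥ μ(A)` for every
`A ⊆ {x₁,…,x_m}` and `μ(J⁻(B)) ≥ ν(B)` for every `B ⊆ {y₁,…,y_n}`, then `μ` and `ν` are
`J`-related. -/
theorem finitely_supported_J_related
    {X Y : Type*}
    [TopologicalSpace X] [PolishSpace X] [MeasurableSpace X] [BorelSpace X]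
    [TopologicalSpace Y] [PolishSpace Y] [MeasurableSpace Y] [BorelSpace Y]
    (J : Set (X × Y)) (m n : ℕ)
    (x : Fin m → X) (y : Fin n → Y) (a : Fin m → ℝ≥0∞) (b : Fin n → ℝ≥0∞)
    (ha : ∀ i, 0 < a i) (hb : ∀ j, 0 < b j)
    (μ : Measure X) (ν : Measure Y)
    [IsProbabilityMeasure μ] [IsProbabilityMeasure ν]
    (hμ : μ = ∑ i, a i • Measure.dirac (x i))
    (hν : ν = ∑ j, b j • Measure.dirac (y j))
    (h1 : ∀ A : Set X, A ⊆ Set.range x → μ A ≤ ν {y' | ∃ x' ∈ A, (x', y') ∈ J})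
    (h2 : ∀ B : Set Y, B ⊆ Set.range y → ν B ≤ μ {x' | ∃ y' ∈ B, (x', y') ∈ J}) :
    ∃ π : Measure (X × Y), IsProbabilityMeasure π ∧
      π.map Prod.fst = μ ∧ π.map Prod.snd = ν ∧ π J = 1 :=
  finitely_supported_J_related_general J m n x y a b μ ν hμ hν h1
end

section
/- Let n ≥ 1, let μ and ν be Borel probability measures on ℝⁿ with finite first moments, and assume μ is absolutely continuous with respect to the Lebesgue measure. Let π be a coupling of μ and ν and let Σ ⊆ ℝⁿ × ℝⁿ be a σ-compact set with π(Σ) = 1. Then π is concentrated on a σ-compact set R ⊆ Σ with π(R) = 1 such that for every (x,y) ∈ R and every r > 0, the point x is a Lebesgue density point of the set C_{y,r} := {x' ∈ ℝⁿ : ∃ y' with |y' − y| ≤ r and (x',y') ∈ Σ}, i.e. lim_{δ→0} Leb(C_{y,r} ∩ B_δ(x)) / Leb(B_δ(x)) = 1, where B_δ(x) denotes the open Euclidean ball of radius δ around x. -/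
/-!
Write `C y r` for `fstOverClosedBall Sig y r`. Since the first marginal of `π` is
absolutely continuous, a Lebesgue-null set of first coordinates carries no `π`-mass, so by
Lebesgue's density theorem, for `π`-a.e. `(x, y)`, `x` is a density point of every `C y₀ q`
containing it, with `y₀` ranging over a countable dense set and `q` over the rationals.
Given `(x, y) ∈ Sig` and `r > 0`, choose `dist y y₀ < q < r / 2`: then
`x ∈ C y₀ q ⊆ C y r`, and density passes to the larger set. Inner regularity of `π` turns
the resulting set of full measure into a σ-compact one.
-/

open MeasureTheory Set Filter Metric
open scoped ENNReal Topology

theorem IsSigmaCompact.measurableSet {α : Type*} [TopologicalSpace α] [T2Space α]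
    [MeasurableSpace α] [OpensMeasurableSpace α] {s : Set α} (hs : IsSigmaCompact s) :
    MeasurableSet s := by
  obtain ⟨K, hK, rfl⟩ := hs
  exact MeasurableSet.iUnion fun m => (hK m).measurableSet

section InnerRegular

variable {α : Type*} [TopologicalSpace α] [T2Space α] [MeasurableSpace α]
  [OpensMeasurableSpace α] {μ : Measure α} [μ.InnerRegularCompactLTTop] {s : Set α}

theorem MeasurableSet.exists_isSigmaCompact_subset_measure_eq (hs : MeasurableSet s)
    (hμs : μ s ≠ ∞) : ∃ K ⊆ s, IsSigmaCompact K ∧ μ K = μ s := by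
  choose K hKs hKc hK using fun m : ℕ =>
    hs.exists_isCompact_sdiff_lt hμs (ENNReal.inv_ne_zero.2 (ENNReal.natCast_ne_top m))
  refine ⟨⋃ m, K m, iUnion_subset hKs, ⟨K, hKc, rfl⟩,
    measure_eq_measure_of_null_sdiff (iUnion_subset hKs) (nonpos_iff_eq_zero.1 ?_)⟩
  refine ge_of_tendsto' ENNReal.tendsto_inv_nat_nhds_zero fun m => ?_
  exact (measure_mono (sdiff_subset_sdiff_right (subset_iUnion K m))).trans (hK m).le

theorem MeasurableSet.exists_isSigmaCompact_subset_of_ae {p : α → Prop} (hs : MeasurableSet s)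
    (hμs : μ s ≠ ∞) (hp : ∀ᵐ x ∂μ, x ∈ s → p x) :
    ∃ K ⊆ s, IsSigmaCompact K ∧ μ K = μ s ∧ ∀ x ∈ K, p x := by
  set N := toMeasurable μ {x | ¬(x ∈ s → p x)}
  have hN : μ N = 0 := by rwa [measure_toMeasurable, ← ae_iff]
  obtain ⟨K, hKs, hKc, hK⟩ :=
    (hs.diff (measurableSet_toMeasurable μ _)).exists_isSigmaCompact_subset_measure_eq
      (measure_ne_top_of_subset sdiff_subset hμs)
  refine ⟨K, hKs.trans sdiff_subset, hKc, hK.trans (measure_sdiff_null hN), fun x hx => ?_⟩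
  obtain ⟨hxs, hxN⟩ := hKs hx
  by_contra hpx
  exact hxN (subset_toMeasurable μ _ fun h => hpx (h hxs))

end InnerRegular

section DensityPoint

variable {X : Type*} [PseudoMetricSpace X] [MeasurableSpace X]

def IsDensityPoint (μ : Measure X) (s : Set X) (x : X) : Prop :=
  Tendsto (fun δ : ℝ => μ (s ∩ ball x δ) / μ (ball x δ)) (𝓝[>] 0) (𝓝 1)

theorem IsDensityPoint.mono {μ : Measure X} {s t : Set X} {x : X} (h : IsDensityPoint μ s x)
    (hst : s ⊆ t) : IsDensityPoint μ t x :=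
  tendsto_of_tendsto_of_tendsto_of_le_of_le h tendsto_const_nhds
    (fun _ => ENNReal.div_le_div_right (measure_mono (inter_subset_inter_left _ hst)) _)
    (fun _ => (ENNReal.div_le_div_right (measure_mono inter_subset_right) _).trans
      ENNReal.div_self_le_one)

end DensityPoint

section AddHaar

variable {E : Type*} [NormedAddCommGroup E] [NormedSpace ℝ E] [FiniteDimensional ℝ E]
  [MeasurableSpace E] [BorelSpace E] (μ : Measure E) [μ.IsAddHaarMeasure]

theorem addHaar_closedBall_ae_eq_ball (x : E) {r : ℝ} (hr : r ≠ 0) :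
    closedBall x r =ᵐ[μ] ball x r := by
  rw [ae_eq_set, closedBall_sdiff_ball, sdiff_eq_empty.2 ball_subset_closedBall]
  exact ⟨Measure.addHaar_sphere_of_ne_zero μ x hr, measure_empty⟩

theorem isDensityPoint_iff_tendsto_closedBall (s : Set E) (x : E) :
    IsDensityPoint μ s x ↔
      Tendsto (fun δ : ℝ => μ (s ∩ closedBall x δ) / μ (closedBall x δ))
        (𝓝[>] 0) (𝓝 1) := by
  refine tendsto_congr' ?_
  filter_upwards [self_mem_nhdsWithin] with δ (hδ : 0 < δ)
  have h := addHaar_closedBall_ae_eq_ball μ x hδ.ne'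
  rw [measure_congr h, measure_congr ((ae_eq_refl s).inter h)]

theorem ae_isDensityPoint (s : Set E) : ∀ᵐ x ∂μ, x ∈ s → IsDensityPoint μ s x := by
  refine ae_imp_of_ae_restrict ?_
  filter_upwards [Besicovitch.ae_tendsto_measure_inter_div μ s] with x hx
  exact (isDensityPoint_iff_tendsto_closedBall μ s x).2 hx

end AddHaar

section Coupling

variable {X Y : Type*} [PseudoMetricSpace Y]

def fstOverClosedBall (S : Set (X × Y)) (y : Y) (r : ℝ) : Set X :=
  {x | ∃ y', dist y' y ≤ r ∧ (x, y') ∈ S}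

theorem mem_fstOverClosedBall {S : Set (X × Y)} {x : X} {y y₀ : Y} {r : ℝ} (h : (x, y) ∈ S)
    (hy : dist y y₀ ≤ r) : x ∈ fstOverClosedBall S y₀ r :=
  ⟨y, hy, h⟩

theorem fstOverClosedBall_subset {S : Set (X × Y)} {y y₀ : Y} {r r₀ : ℝ}
    (h : dist y₀ y + r₀ ≤ r) : fstOverClosedBall S y₀ r₀ ⊆ fstOverClosedBall S y r := by
  rintro x ⟨y', hy', hx⟩
  exact ⟨y', (dist_triangle y' y₀ y).trans (by linarith), hx⟩

theorem ae_isDensityPoint_fstOverClosedBall {E : Type*} [NormedAddCommGroup E]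
    [NormedSpace ℝ E] [FiniteDimensional ℝ E] [MeasurableSpace E] [BorelSpace E]
    [TopologicalSpace.SeparableSpace Y] [MeasurableSpace Y]
    (μ : Measure E) [μ.IsAddHaarMeasure] {π : Measure (E × Y)} (hπ : π.map Prod.fst ≪ μ)
    (S : Set (E × Y)) :
    ∀ᵐ p ∂π, p ∈ S → ∀ r > 0, IsDensityPoint μ (fstOverClosedBall S p.2 r) p.1 := by
  obtain ⟨D, hDc, hD⟩ := TopologicalSpace.exists_countable_dense Y
  have hfst : Measure.QuasiMeasurePreserving Prod.fst π μ := ⟨measurable_fst, hπ⟩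
  have hgood : ∀ᵐ p ∂π, ∀ y₀ ∈ D, ∀ q : ℚ, p.1 ∈ fstOverClosedBall S y₀ q →
      IsDensityPoint μ (fstOverClosedBall S y₀ q) p.1 :=
    (ae_ball_iff hDc).2 fun y₀ _ => ae_all_iff.2 fun q => hfst.ae (ae_isDensityPoint μ _)
  filter_upwards [hgood] with ⟨x, y⟩ hxy hS r hr
  obtain ⟨q, hq, hqr⟩ := exists_rat_btwn (half_pos hr)
  obtain ⟨y₀, hy₀D, hy₀⟩ := hD.exists_dist_lt y hq
  refine (hxy y₀ hy₀D q (mem_fstOverClosedBall hS hy₀.le)).mono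
    (fstOverClosedBall_subset ?_)
  rw [dist_comm]
  linarith

end Coupling

theorem concentrated_on_lebesgue_points_general
    (n : ℕ)
    (μ : Measure (EuclideanSpace ℝ (Fin n)))
    (hac : μ ≪ volume)
    (π : Measure (EuclideanSpace ℝ (Fin n) × EuclideanSpace ℝ (Fin n)))
    [IsProbabilityMeasure π]
    (hπ1 : π.map Prod.fst = μ)
    (Sig : Set (EuclideanSpace ℝ (Fin n) × EuclideanSpace ℝ (Fin n)))
    (hSigc : IsSigmaCompact Sig) (hSig : π Sig = 1) :
    ∃ R ⊆ Sig, IsSigmaCompact R ∧ π R = 1 ∧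
      ∀ p ∈ R, ∀ r : ℝ, 0 < r →
        Tendsto
          (fun δ : ℝ =>
            volume ({x' | ∃ y', dist y' p.2 ≤ r ∧ (x', y') ∈ Sig} ∩ ball p.1 δ) /
              volume (ball p.1 δ))
          (nhdsWithin 0 (Set.Ioi 0)) (nhds 1) := by
  obtain ⟨R, hRSig, hRc, hRπ, hR⟩ := hSigc.measurableSet.exists_isSigmaCompact_subset_of_ae
    (measure_ne_top π Sig) (ae_isDensityPoint_fstOverClosedBall volume (hπ1 ▸ hac) Sig)
  exact ⟨R, hRSig, hRc, hRπ.trans hSig, hR⟩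

/-- **Lemma (Suhr, Lemma 3.10; Champion–De Pascale).** Let `μ`, `ν` be probability measures
on `ℝⁿ` with finite first moments, with `μ` absolutely continuous w.r.t. Lebesgue measure.
Let `π` be a coupling of `μ` and `ν` and `Σ` a σ-compact set with `π(Σ) = 1`. Then `π` is
concentrated on a σ-compact set `R ⊆ Σ` such that for all `(x, y) ∈ R` and all `r > 0`,
the point `x` is a Lebesgue density point of
`π₁(Σ ∩ (ℝⁿ × closedBall y r)) = {x' | ∃ y', dist y' y ≤ r ∧ (x', y') ∈ Σ}`. -/
theorem concentrated_on_lebesgue_points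
    (n : ℕ) (hn : 1 ≤ n)
    (μ ν : Measure (EuclideanSpace ℝ (Fin n)))
    [IsProbabilityMeasure μ] [IsProbabilityMeasure ν]
    (hμmom : ∫⁻ x, (‖x‖₊ : ℝ≥0∞) ∂μ < ⊤) (hνmom : ∫⁻ x, (‖x‖₊ : ℝ≥0∞) ∂ν < ⊤)
    (hac : μ ≪ volume)
    (π : Measure (EuclideanSpace ℝ (Fin n) × EuclideanSpace ℝ (Fin n)))
    [IsProbabilityMeasure π]
    (hπ1 : π.map Prod.fst = μ) (hπ2 : π.map Prod.snd = ν)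
    (Sig : Set (EuclideanSpace ℝ (Fin n) × EuclideanSpace ℝ (Fin n)))
    (hSigc : IsSigmaCompact Sig) (hSig : π Sig = 1) :
    ∃ R ⊆ Sig, IsSigmaCompact R ∧ π R = 1 ∧
      ∀ p ∈ R, ∀ r : ℝ, 0 < r →
        Tendsto
          (fun δ : ℝ =>
            volume ({x' | ∃ y', dist y' p.2 ≤ r ∧ (x', y') ∈ Sig} ∩ ball p.1 δ) /
              volume (ball p.1 δ))
          (nhdsWithin 0 (Set.Ioi 0)) (nhds 1) :=
  concentrated_on_lebesgue_points_general n μ hac π hπ1 Sig hSigc hSig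
end
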